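/- Let H be a Hopf algebra over a field k, C a left H-module factor coalgebra of H, U a right H-comodule and V an object of the category of (H,C)-Hopf modules ᴴM^C (left H-module, right C-comodule with compatible structures). Then the right C-comodule U ⊗ V, with coaction u ⊗ v ↦ Σ (u₍₀₎ ⊗ v₍₀₎) ⊗ u₍₁₎·v₍₁₎ (where H acts on C), is isomorphic as a right C-comodule to U_triv ⊗ V, where U_triv carries the trivial coaction. An explicit isomorphism sends u ⊗ v to Σ u₍₀₎ ⊗ u₍₁₎v, with inverse u ⊗ v ↦ Σ u₍₀₎ ⊗ S(u₍₁₎)v. -/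
import Mathlib


open TensorProduct LinearMap Coalgebra HopfAlgebra

variable (k : Type*) [Field k]

/-- `ρ` is a right `C`-comodule structure on `V` (counit and coassociativity axioms). -/
def IsRightComodule (C V : Type*) [AddCommGroup C] [Module k C] [Coalgebra k C]
    [AddCommGroup V] [Module k V] (ρ : V →ₗ[k] V ⊗[k] C) : Prop :=
  (∀ v : V, (TensorProduct.rid k V)
      (LinearMap.lTensor V (Coalgebra.counit (R := k) (A := C)) (ρ v)) = v) ∧
    ∀ v : V, LinearMap.lTensor V (Coalgebra.comul (R := k) (A := C)) (ρ v) =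
      (TensorProduct.assoc k V C C) (LinearMap.rTensor C ρ (ρ v))

/-- The action `H ⊗ M → M` of an algebra `H` on a module `M`, as a linear map. -/
noncomputable def actionMap (H M : Type*) [Ring H] [Algebra k H]
    [AddCommGroup M] [Module k M] [Module H M] [IsScalarTower k H M] [SMulCommClass k H M] :
    H ⊗[k] M →ₗ[k] M :=
  TensorProduct.lift (Algebra.lsmul k k M).toLinearMap

section Aux

set_option linter.unusedSectionVars false

variable {k} (H U V C : Type*) [Ring H] [HopfAlgebra k H]
  [AddCommGroup C] [Module k C] [Coalgebra k C]
  [Module H C] [IsScalarTower k H C] [SMulCommClass k H C]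
  [AddCommGroup U] [Module k U]
  [AddCommGroup V] [Module k V] [Module H V] [IsScalarTower k H V] [SMulCommClass k H V]

@[simp] lemma actionMap_tmul (h : H) (v : V) : actionMap k H V (h ⊗ₜ[k] v) = h • v := rfl

/-- `(a ⊗ h) ⊗ v ↦ a ⊗ (h • v)`. -/
noncomputable def auxAct : (U ⊗[k] H) ⊗[k] V →ₗ[k] U ⊗[k] V :=
  LinearMap.lTensor U (actionMap k H V) ∘ₗ (TensorProduct.assoc k U H V).toLinearMap

@[simp] lemma auxAct_tmul (a : U) (h : H) (v : V) :
    auxAct H U V ((a ⊗ₜ[k] h) ⊗ₜ[k] v) = a ⊗ₜ[k] (h • v) := by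
  simp [auxAct]

/-- `((a ⊗ g) ⊗ h) ⊗ v ↦ a ⊗ ((S g * h) • v)`. -/
noncomputable def auxL : ((U ⊗[k] H) ⊗[k] H) ⊗[k] V →ₗ[k] U ⊗[k] V :=
  auxAct H U V ∘ₗ LinearMap.rTensor V
    (LinearMap.lTensor U (LinearMap.mul' k H ∘ₗ LinearMap.rTensor H (antipode (R := k))) ∘ₗ
      (TensorProduct.assoc k U H H).toLinearMap)

@[simp] lemma auxL_tmul (a : U) (g h : H) (v : V) :
    auxL H U V (((a ⊗ₜ[k] g) ⊗ₜ[k] h) ⊗ₜ[k] v) =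
      a ⊗ₜ[k] ((antipode (R := k) g * h) • v) := by
  simp [auxL]

/-- `((a ⊗ g) ⊗ h) ⊗ v ↦ a ⊗ ((g * S h) • v)`. -/
noncomputable def auxL' : ((U ⊗[k] H) ⊗[k] H) ⊗[k] V →ₗ[k] U ⊗[k] V :=
  auxAct H U V ∘ₗ LinearMap.rTensor V
    (LinearMap.lTensor U (LinearMap.mul' k H ∘ₗ LinearMap.lTensor H (antipode (R := k))) ∘ₗ
      (TensorProduct.assoc k U H H).toLinearMap)

@[simp] lemma auxL'_tmul (a : U) (g h : H) (v : V) :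
    auxL' H U V (((a ⊗ₜ[k] g) ⊗ₜ[k] h) ⊗ₜ[k] v) =
      a ⊗ₜ[k] ((g * antipode (R := k) h) • v) := by
  simp [auxL']

/-- `((a ⊗ g) ⊗ h) ⊗ (v ⊗ c) ↦ (a ⊗ g • v) ⊗ (h • c)`. -/
noncomputable def auxB : ((U ⊗[k] H) ⊗[k] H) ⊗[k] (V ⊗[k] C) →ₗ[k] (U ⊗[k] V) ⊗[k] C :=
  TensorProduct.map (auxAct H U V) (actionMap k H C) ∘ₗ
    (TensorProduct.tensorTensorTensorComm k (U ⊗[k] H) H V C).toLinearMap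

@[simp] lemma auxB_tmul (a : U) (g h : H) (v : V) (c : C) :
    auxB H U V C (((a ⊗ₜ[k] g) ⊗ₜ[k] h) ⊗ₜ[k] (v ⊗ₜ[k] c)) =
      (a ⊗ₜ[k] (g • v)) ⊗ₜ[k] (h • c) := by
  simp [auxB]

end Aux

set_option maxHeartbeats 1600000 in
/-- Let `C` be a left `H`-module factor coalgebra of a Hopf algebra `H`
(quotient map `π`), `U` a right `H`-comodule and `V` an `(H,C)`-Hopf module in `ᴴM^C`.
Then the right `C`-comodule `U ⊗ V`, with coaction
`u ⊗ v ↦ Σ (u₍₀₎ ⊗ v₍₀₎) ⊗ u₍₁₎·v₍₁₎`, is isomorphic as a right `C`-comodule to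
`U_triv ⊗ V`; an explicit isomorphism is `u ⊗ v ↦ Σ u₍₀₎ ⊗ u₍₁₎v`, with inverse
`u ⊗ v ↦ Σ u₍₀₎ ⊗ S(u₍₁₎)v`. -/
theorem tensor_hopfModule_comodule_iso_triv
    (H C U V : Type*) [Ring H] [HopfAlgebra k H]
    [AddCommGroup C] [Module k C] [Coalgebra k C]
    [Module H C] [IsScalarTower k H C] [SMulCommClass k H C]
    [AddCommGroup U] [Module k U]
    [AddCommGroup V] [Module k V] [Module H V] [IsScalarTower k H V] [SMulCommClass k H V]
    -- `C` is a left `H`-module factor coalgebra of `H` via `π`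
    (π : H →ₗc[k] C) (hπsurj : Function.Surjective π)
    (hπlin : ∀ g h : H, π (g * h) = g • π h)
    -- `U` is a right `H`-comodule
    (ρU : U →ₗ[k] U ⊗[k] H) (hU : IsRightComodule k H U ρU)
    -- `V` is an object of `ᴴM^C`
    (ρV : V →ₗ[k] V ⊗[k] C) (hV : IsRightComodule k C V ρV)
    (hcompat : ∀ (h : H) (v : V),
      ρV (h • v) =
        (TensorProduct.map (actionMap k H V) (actionMap k H C))
          ((TensorProduct.tensorTensorTensorComm k H H V C)
            ((TensorProduct.map (Coalgebra.comul (R := k)) ρV) (h ⊗ₜ[k] v)))) :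
    -- the coaction (3.1) on `U ⊗ V` and the trivial-on-`U` coaction
    letI ρUV : U ⊗[k] V →ₗ[k] (U ⊗[k] V) ⊗[k] C :=
      LinearMap.lTensor (U ⊗[k] V) (actionMap k H C) ∘ₗ
        (TensorProduct.tensorTensorTensorComm k U H V C).toLinearMap ∘ₗ
          TensorProduct.map ρU ρV
    letI ρtriv : U ⊗[k] V →ₗ[k] (U ⊗[k] V) ⊗[k] C :=
      (TensorProduct.assoc k U V C).symm.toLinearMap ∘ₗ LinearMap.lTensor U ρV
    letI φ : U ⊗[k] V →ₗ[k] U ⊗[k] V :=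
      LinearMap.lTensor U (actionMap k H V) ∘ₗ
        (TensorProduct.assoc k U H V).toLinearMap ∘ₗ LinearMap.rTensor V ρU
    letI ψ : U ⊗[k] V →ₗ[k] U ⊗[k] V :=
      LinearMap.lTensor U (actionMap k H V) ∘ₗ
        (TensorProduct.assoc k U H V).toLinearMap ∘ₗ
          LinearMap.rTensor V (LinearMap.lTensor U (antipode (R := k)) ∘ₗ ρU)
    (∀ x : U ⊗[k] V, ψ (φ x) = x) ∧ (∀ x : U ⊗[k] V, φ (ψ x) = x) ∧
      ∀ x : U ⊗[k] V, ρtriv (φ x) = LinearMap.rTensor C φ (ρUV x) := by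
  set φ : U ⊗[k] V →ₗ[k] U ⊗[k] V := LinearMap.lTensor U (actionMap k H V) ∘ₗ
      (TensorProduct.assoc k U H V).toLinearMap ∘ₗ LinearMap.rTensor V ρU with hφdef
  set ψ : U ⊗[k] V →ₗ[k] U ⊗[k] V := LinearMap.lTensor U (actionMap k H V) ∘ₗ
      (TensorProduct.assoc k U H V).toLinearMap ∘ₗ
        LinearMap.rTensor V (LinearMap.lTensor U (antipode (R := k)) ∘ₗ ρU) with hψdef
  set ρtriv : U ⊗[k] V →ₗ[k] (U ⊗[k] V) ⊗[k] C :=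
      (TensorProduct.assoc k U V C).symm.toLinearMap ∘ₗ
        LinearMap.lTensor U ρV with hρtrivdef
  set ρUV : U ⊗[k] V →ₗ[k] (U ⊗[k] V) ⊗[k] C :=
      LinearMap.lTensor (U ⊗[k] V) (actionMap k H C) ∘ₗ
        (TensorProduct.tensorTensorTensorComm k U H V C).toLinearMap ∘ₗ
          TensorProduct.map ρU ρV with hρUVdef
  -- basic computations
  have hφ : ∀ (u : U) (v : V), φ (u ⊗ₜ[k] v) = auxAct H U V (ρU u ⊗ₜ[k] v) := by
    intro u v
    rw [hφdef]
    simp [auxAct]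
  have hψ : ∀ (u : U) (v : V),
      ψ (u ⊗ₜ[k] v) = auxAct H U V ((LinearMap.lTensor U (antipode (R := k)) (ρU u)) ⊗ₜ[k] v) := by
    intro u v
    rw [hψdef]
    simp [auxAct]
  have hρtriv : ∀ (u : U) (w : V),
      ρtriv (u ⊗ₜ[k] w) = (TensorProduct.assoc k U V C).symm (u ⊗ₜ[k] ρV w) := by
    intro u w
    rw [hρtrivdef]
    simp
  have hρUV : ∀ (u : U) (v : V),
      ρUV (u ⊗ₜ[k] v) = LinearMap.lTensor (U ⊗[k] V) (actionMap k H C)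
        ((TensorProduct.tensorTensorTensorComm k U H V C) (ρU u ⊗ₜ[k] ρV v)) := by
    intro u v
    rw [hρUVdef]
    simp
  -- rewrite coassociativity of ρU
  have hcoassoc : ∀ u : U, LinearMap.rTensor H ρU (ρU u) =
      (TensorProduct.assoc k U H H).symm (LinearMap.lTensor U (Coalgebra.comul (R := k)) (ρU u)) := by
    intro u
    rw [hU.2 u]
    simp
  -- the counit step, shared by parts 1 and 2
  have step3 : ∀ (y : U ⊗[k] H) (v : V),
      auxAct H U V ((LinearMap.lTensor U ((Algebra.linearMap k H) ∘ₗ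
          (Coalgebra.counit (R := k) (A := H))) y) ⊗ₜ[k] v) =
        ((TensorProduct.rid k U) ((LinearMap.lTensor U (Coalgebra.counit (R := k) (A := H))) y))
          ⊗ₜ[k] v := by
    intro y v
    induction y using TensorProduct.induction_on with
    | zero => simp
    | tmul a h =>
      simp [algebraMap_smul, TensorProduct.tmul_smul, TensorProduct.smul_tmul']
    | add y z hy hz => simp [add_tmul, hy, hz]
  ------------------------------------------------------------------
  -- Part 1 : ψ ∘ φ = id
  ------------------------------------------------------------------
  have step1 : ∀ (y : U ⊗[k] H) (v : V),
      ψ (auxAct H U V (y ⊗ₜ[k] v)) = auxL H U V ((LinearMap.rTensor H ρU y) ⊗ₜ[k] v) := by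
    intro y v
    induction y using TensorProduct.induction_on with
    | zero => simp
    | tmul a h =>
      rw [auxAct_tmul, hψ a (h • v)]
      rw [LinearMap.rTensor_tmul]
      have sub : ∀ z : U ⊗[k] H,
          auxAct H U V ((LinearMap.lTensor U (antipode (R := k)) z) ⊗ₜ[k] (h • v)) =
            auxL H U V ((z ⊗ₜ[k] h) ⊗ₜ[k] v) := by
        intro z
        induction z using TensorProduct.induction_on with
        | zero => simp
        | tmul a₀ g => simp [mul_smul]
        | add z₁ z₂ h₁ h₂ => simp [add_tmul, h₁, h₂]
      exact sub (ρU a)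
    | add y z hy hz => simp [add_tmul, hy, hz]
  have step2 : ∀ (z : U ⊗[k] (H ⊗[k] H)) (v : V),
      auxL H U V (((TensorProduct.assoc k U H H).symm z) ⊗ₜ[k] v) =
        auxAct H U V ((LinearMap.lTensor U (LinearMap.mul' k H ∘ₗ
          LinearMap.rTensor H (antipode (R := k))) z) ⊗ₜ[k] v) := by
    intro z v
    induction z using TensorProduct.induction_on with
    | zero => simp
    | tmul a gh =>
      induction gh using TensorProduct.induction_on with
      | zero => simp
      | tmul g h => simp
      | add w₁ w₂ h₁ h₂ => simp [tmul_add, add_tmul, h₁, h₂]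
    | add z₁ z₂ h₁ h₂ => simp [add_tmul, h₁, h₂]
  have part1 : ∀ (u : U) (v : V), ψ (φ (u ⊗ₜ[k] v)) = u ⊗ₜ[k] v := by
    intro u v
    rw [hφ, step1, hcoassoc, step2, ← LinearMap.lTensor_comp_apply]
    rw [show ((LinearMap.mul' k H ∘ₗ LinearMap.rTensor H (antipode (R := k))) ∘ₗ
        (Coalgebra.comul (R := k)) : H →ₗ[k] H) = (Algebra.linearMap k H) ∘ₗ Coalgebra.counit by
      rw [LinearMap.comp_assoc]; exact HopfAlgebra.mul_antipode_rTensor_comul]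
    rw [step3, hU.1 u]
  ------------------------------------------------------------------
  -- Part 2 : φ ∘ ψ = id
  ------------------------------------------------------------------
  have step1' : ∀ (y : U ⊗[k] H) (v : V),
      φ (auxAct H U V ((LinearMap.lTensor U (antipode (R := k)) y) ⊗ₜ[k] v)) =
        auxL' H U V ((LinearMap.rTensor H ρU y) ⊗ₜ[k] v) := by
    intro y v
    induction y using TensorProduct.induction_on with
    | zero => simp
    | tmul a h =>
      rw [LinearMap.lTensor_tmul, auxAct_tmul, hφ a (antipode (R := k) h • v),
        LinearMap.rTensor_tmul]
      have sub : ∀ z : U ⊗[k] H,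
          auxAct H U V (z ⊗ₜ[k] (antipode (R := k) h • v)) =
            auxL' H U V ((z ⊗ₜ[k] h) ⊗ₜ[k] v) := by
        intro z
        induction z using TensorProduct.induction_on with
        | zero => simp
        | tmul a₀ g => simp [mul_smul]
        | add z₁ z₂ h₁ h₂ => simp [add_tmul, h₁, h₂]
      exact sub (ρU a)
    | add y z hy hz => simp [add_tmul, hy, hz]
  have step2' : ∀ (z : U ⊗[k] (H ⊗[k] H)) (v : V),
      auxL' H U V (((TensorProduct.assoc k U H H).symm z) ⊗ₜ[k] v) =
        auxAct H U V ((LinearMap.lTensor U (LinearMap.mul' k H ∘ₗ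
          LinearMap.lTensor H (antipode (R := k))) z) ⊗ₜ[k] v) := by
    intro z v
    induction z using TensorProduct.induction_on with
    | zero => simp
    | tmul a gh =>
      induction gh using TensorProduct.induction_on with
      | zero => simp
      | tmul g h => simp
      | add w₁ w₂ h₁ h₂ => simp [tmul_add, add_tmul, h₁, h₂]
    | add z₁ z₂ h₁ h₂ => simp [add_tmul, h₁, h₂]
  have part2 : ∀ (u : U) (v : V), φ (ψ (u ⊗ₜ[k] v)) = u ⊗ₜ[k] v := by
    intro u v
    rw [hψ, step1', hcoassoc, step2', ← LinearMap.lTensor_comp_apply]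
    rw [show ((LinearMap.mul' k H ∘ₗ LinearMap.lTensor H (antipode (R := k))) ∘ₗ
        (Coalgebra.comul (R := k)) : H →ₗ[k] H) = (Algebra.linearMap k H) ∘ₗ Coalgebra.counit by
      rw [LinearMap.comp_assoc]; exact HopfAlgebra.mul_antipode_lTensor_comul]
    rw [step3, hU.1 u]
  ------------------------------------------------------------------
  -- Part 3 : comodule morphism property
  ------------------------------------------------------------------
  have stepR : ∀ (x : U ⊗[k] H) (w : V ⊗[k] C),
      LinearMap.rTensor C φ (LinearMap.lTensor (U ⊗[k] V) (actionMap k H C)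
          ((TensorProduct.tensorTensorTensorComm k U H V C) (x ⊗ₜ[k] w))) =
        auxB H U V C ((LinearMap.rTensor H ρU x) ⊗ₜ[k] w) := by
    intro x w
    induction x using TensorProduct.induction_on with
    | zero => simp
    | tmul a g =>
      induction w using TensorProduct.induction_on with
      | zero => simp
      | tmul v' c =>
        rw [TensorProduct.tensorTensorTensorComm_tmul, LinearMap.lTensor_tmul,
          LinearMap.rTensor_tmul, LinearMap.rTensor_tmul, hφ a v', actionMap_tmul]
        have sub : ∀ z : U ⊗[k] H,
            (auxAct H U V (z ⊗ₜ[k] v')) ⊗ₜ[k] (g • c) =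
              auxB H U V C ((z ⊗ₜ[k] g) ⊗ₜ[k] (v' ⊗ₜ[k] c)) := by
          intro z
          induction z using TensorProduct.induction_on with
          | zero => simp
          | tmul a₀ a₁ => simp
          | add z₁ z₂ h₁ h₂ => simp [add_tmul, h₁, h₂]
        exact sub (ρU a)
      | add w₁ w₂ h₁ h₂ => simp [tmul_add, h₁, h₂]
    | add x₁ x₂ h₁ h₂ => simp [add_tmul, h₁, h₂]
  have stepL : ∀ (y : U ⊗[k] H) (v : V),
      ρtriv (auxAct H U V (y ⊗ₜ[k] v)) =
        auxB H U V C (((TensorProduct.assoc k U H H).symm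
          (LinearMap.lTensor U (Coalgebra.comul (R := k)) y)) ⊗ₜ[k] (ρV v)) := by
    intro y v
    induction y using TensorProduct.induction_on with
    | zero => simp
    | tmul a h =>
      rw [auxAct_tmul, hρtriv a (h • v), hcompat h v, TensorProduct.map_tmul,
        LinearMap.lTensor_tmul]
      have sub : ∀ (z : H ⊗[k] H) (w : V ⊗[k] C),
          (TensorProduct.assoc k U V C).symm (a ⊗ₜ[k]
              (TensorProduct.map (actionMap k H V) (actionMap k H C)
                ((TensorProduct.tensorTensorTensorComm k H H V C) (z ⊗ₜ[k] w)))) =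
            auxB H U V C (((TensorProduct.assoc k U H H).symm (a ⊗ₜ[k] z)) ⊗ₜ[k] w) := by
        intro z w
        induction z using TensorProduct.induction_on with
        | zero => simp
        | tmul g h' =>
          induction w using TensorProduct.induction_on with
          | zero => simp
          | tmul v' c => simp
          | add w₁ w₂ h₁ h₂ => simp [tmul_add, h₁, h₂]
        | add z₁ z₂ h₁ h₂ => simp [add_tmul, tmul_add, h₁, h₂]
      exact sub (Coalgebra.comul h) (ρV v)
    | add y z hy hz => simp [add_tmul, hy, hz]
  have part3 : ∀ (u : U) (v : V),
      ρtriv (φ (u ⊗ₜ[k] v)) = LinearMap.rTensor C φ (ρUV (u ⊗ₜ[k] v)) := by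
    intro u v
    rw [hφ, stepL, hρUV, stepR, hcoassoc]
  ------------------------------------------------------------------
  refine ⟨?_, ?_, ?_⟩
  · intro x
    induction x using TensorProduct.induction_on with
    | zero => simp
    | tmul u v => exact part1 u v
    | add a b ha hb => simp [ha, hb]
  · intro x
    induction x using TensorProduct.induction_on with
    | zero => simp
    | tmul u v => exact part2 u v
    | add a b ha hb => simp [ha, hb]
  · intro x
    induction x using TensorProduct.induction_on with
    | zero => simp
    | tmul u v => exact part3 u v
    | add a b ha hb => simp [ha, hb]
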